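/- Let n ≥ 3 and let c : M → ℝ be a smooth strictly positive function on a smooth Riemannian manifold (M,g) of dimension n. Then for every smooth function u on M, the Laplace–Beltrami operators satisfy the conformal transformation law -Δ_{c⁴g} u = c^{-(n+2)} ( -Δ_g + q ) ( c^{n-2} u ), where q = c^{-(n-2)} Δ_g (c^{n-2}). -/

import Mathlib

open scoped BigOperators

/-- Partial derivative in the `i`-th coordinate direction. -/
noncomputable def pd {n : ℕ} (i : Fin n) (f : (Fin n → ℝ) → ℝ) (x : Fin n → ℝ) : ℝ :=
  fderiv ℝ f x (Pi.single i 1)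

/-- The Laplace–Beltrami operator of a Riemannian metric `g` (given in coordinates as a
matrix-valued function), with the analyst's sign convention: `Δ_g u = |g|^{-1/2} ∂_i (|g|^{1/2} g^{ij} ∂_j u)`,
so that `-Δ_g` is positive. -/
noncomputable def lapBel {n : ℕ} (g : (Fin n → ℝ) → Matrix (Fin n) (Fin n) ℝ)
    (u : (Fin n → ℝ) → ℝ) (x : Fin n → ℝ) : ℝ :=
  (Real.sqrt (g x).det)⁻¹ *
    ∑ i, pd i (fun y => Real.sqrt (g y).det * ∑ j, (g y)⁻¹ i j * pd j u y) x

section auxiliary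

section aux
variable {n : ℕ}

lemma contDiff_pd {f : (Fin n → ℝ) → ℝ} (hf : ContDiff ℝ (⊤ : ℕ∞) f) (i : Fin n) :
    ContDiff ℝ (⊤ : ℕ∞) (pd i f) :=
  (hf.fderiv_right (by simp)).clm_apply contDiff_const

lemma pd_mul {f h : (Fin n → ℝ) → ℝ} {x} (hf : DifferentiableAt ℝ f x)
    (hh : DifferentiableAt ℝ h x) (i : Fin n) :
    pd i (fun y => f y * h y) x = pd i f x * h x + f x * pd i h x := by
  unfold pd
  rw [fderiv_fun_mul hf hh]
  simp
  ring

lemma pd_add {f h : (Fin n → ℝ) → ℝ} {x} (hf : DifferentiableAt ℝ f x)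
    (hh : DifferentiableAt ℝ h x) (i : Fin n) :
    pd i (fun y => f y + h y) x = pd i f x + pd i h x := by
  unfold pd
  rw [fderiv_fun_add hf hh]
  simp

lemma pd_sum {ι : Type*} {s : Finset ι} {f : ι → (Fin n → ℝ) → ℝ} {x}
    (hf : ∀ j ∈ s, DifferentiableAt ℝ (f j) x) (i : Fin n) :
    pd i (fun y => ∑ j ∈ s, f j y) x = ∑ j ∈ s, pd i (f j) x := by
  unfold pd
  rw [fderiv_fun_sum hf]
  simp

lemma pd_pow {f : (Fin n → ℝ) → ℝ} {x} (hf : DifferentiableAt ℝ f x) (k : ℕ) (i : Fin n) :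
    pd i (fun y => f y ^ k) x = (k : ℝ) * f x ^ (k - 1) * pd i f x := by
  have h1 := (hasDerivAt_pow k (f x)).comp_hasFDerivAt x hf.hasFDerivAt
  unfold pd
  rw [show (fun y => f y ^ k) = (fun t : ℝ => t ^ k) ∘ f from rfl, h1.fderiv]
  simp [mul_assoc]

end aux


section aux2
variable {n : ℕ}

lemma contDiff_det {A : (Fin n → ℝ) → Matrix (Fin n) (Fin n) ℝ}
    (hA : ∀ i j, ContDiff ℝ (⊤ : ℕ∞) fun y => A y i j) :
    ContDiff ℝ (⊤ : ℕ∞) fun y => (A y).det := by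
  have h : (fun y => (A y).det)
      = fun y => ∑ σ : Equiv.Perm (Fin n), ((Equiv.Perm.sign σ : ℤ) : ℝ) * ∏ i, A y (σ i) i := by
    funext y
    rw [Matrix.det_apply]
    simp [Units.smul_def, zsmul_eq_mul]
  rw [h]
  exact ContDiff.sum fun σ _ =>
    contDiff_const.mul (contDiff_prod fun i _ => hA (σ i) i)

lemma contDiff_inv_entry {A : (Fin n → ℝ) → Matrix (Fin n) (Fin n) ℝ}
    (hA : ∀ i j, ContDiff ℝ (⊤ : ℕ∞) fun y => A y i j) (hd : ∀ y, (A y).det ≠ 0) (i j : Fin n) :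
    ContDiff ℝ (⊤ : ℕ∞) fun y => (A y)⁻¹ i j := by
  have h : (fun y => (A y)⁻¹ i j) = fun y => ((A y).det)⁻¹ * (A y).adjugate i j := by
    funext y
    rw [Matrix.inv_def]
    simp [Matrix.smul_apply, smul_eq_mul, Ring.inverse_eq_inv']
  rw [h]
  refine ((contDiff_det hA).inv hd).mul ?_
  have h2 : (fun y => (A y).adjugate i j)
      = fun y => ((A y).updateRow j (Pi.single i 1)).det := by
    funext y; rw [Matrix.adjugate_apply]
  rw [h2]
  apply contDiff_det
  intro a b
  by_cases hab : a = j
  · subst hab; simp only [Matrix.updateRow_apply, if_pos rfl]; exact contDiff_const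
  · simp only [Matrix.updateRow_apply, if_neg hab]
    exact hA a b

lemma contDiff_sqrt_comp {f : (Fin n → ℝ) → ℝ} (hf : ContDiff ℝ (⊤ : ℕ∞) f) (hpos : ∀ y, 0 < f y) :
    ContDiff ℝ (⊤ : ℕ∞) fun y => Real.sqrt (f y) := by
  rw [contDiff_iff_contDiffAt]
  intro y
  exact (Real.contDiffAt_sqrt (hpos y).ne').comp y hf.contDiffAt

end aux2

lemma lapBel_mul {n : ℕ} (g : (Fin n → ℝ) → Matrix (Fin n) (Fin n) ℝ)
    (hgpd : ∀ x, (g x).PosDef) (hgsm : ∀ i j, ContDiff ℝ (⊤ : ℕ∞) fun x => g x i j)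
    (v u : (Fin n → ℝ) → ℝ) (hv : ContDiff ℝ (⊤ : ℕ∞) v) (hu : ContDiff ℝ (⊤ : ℕ∞) u) (x : Fin n → ℝ) :
    lapBel g (fun y => v y * u y) x
      = u x * lapBel g v x + v x * lapBel g u x
        + (Real.sqrt (g x).det)⁻¹ *
            ∑ i, (pd i u x * (Real.sqrt (g x).det * ∑ j, (g x)⁻¹ i j * pd j v x)
              + pd i v x * (Real.sqrt (g x).det * ∑ j, (g x)⁻¹ i j * pd j u x)) := by
  have hdne : ∀ y, (g y).det ≠ 0 := fun y => (hgpd y).det_pos.ne'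
  have hs : ContDiff ℝ (⊤ : ℕ∞) fun y => Real.sqrt (g y).det :=
    contDiff_sqrt_comp (contDiff_det hgsm) fun y => (hgpd y).det_pos
  have hG : ∀ i j, ContDiff ℝ (⊤ : ℕ∞) fun y => (g y)⁻¹ i j := contDiff_inv_entry hgsm hdne
  have hFsm : ∀ (w : (Fin n → ℝ) → ℝ), ContDiff ℝ (⊤ : ℕ∞) w → ∀ i : Fin n,
      ContDiff ℝ (⊤ : ℕ∞) (fun z => Real.sqrt (g z).det * ∑ j, (g z)⁻¹ i j * pd j w z) :=
    fun w hw i => hs.mul (ContDiff.sum fun j _ => (hG i j).mul (contDiff_pd hw j))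
  have key : ∀ i : Fin n,
      (fun y => Real.sqrt (g y).det * ∑ j, (g y)⁻¹ i j * pd j (fun y => v y * u y) y)
        = fun y => u y * (Real.sqrt (g y).det * ∑ j, (g y)⁻¹ i j * pd j v y)
            + v y * (Real.sqrt (g y).det * ∑ j, (g y)⁻¹ i j * pd j u y) := by
    intro i; funext y
    simp only [pd_mul (hv.differentiable (by simp) y) (hu.differentiable (by simp) y)]
    have hsum : ∑ j, (g y)⁻¹ i j * (pd j v y * u y + v y * pd j u y)
        = u y * ∑ j, (g y)⁻¹ i j * pd j v y + v y * ∑ j, (g y)⁻¹ i j * pd j u y := by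
      rw [Finset.mul_sum, Finset.mul_sum, ← Finset.sum_add_distrib]
      exact Finset.sum_congr rfl fun j _ => by ring
    rw [hsum]; ring
  have step : ∀ i : Fin n,
      pd i (fun y => Real.sqrt (g y).det * ∑ j, (g y)⁻¹ i j * pd j (fun y => v y * u y) y) x
      = (pd i u x * (Real.sqrt (g x).det * ∑ j, (g x)⁻¹ i j * pd j v x)
          + u x * pd i (fun y => Real.sqrt (g y).det * ∑ j, (g y)⁻¹ i j * pd j v y) x)
        + (pd i v x * (Real.sqrt (g x).det * ∑ j, (g x)⁻¹ i j * pd j u x)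
          + v x * pd i (fun y => Real.sqrt (g y).det * ∑ j, (g y)⁻¹ i j * pd j u y) x) := by
    intro i
    have du : DifferentiableAt ℝ u x := hu.differentiable (by simp) x
    have dv : DifferentiableAt ℝ v x := hv.differentiable (by simp) x
    have dFv : DifferentiableAt ℝ
        (fun y => Real.sqrt (g y).det * ∑ j, (g y)⁻¹ i j * pd j v y) x :=
      (hFsm v hv i).differentiable (by simp) x
    have dFu : DifferentiableAt ℝ
        (fun y => Real.sqrt (g y).det * ∑ j, (g y)⁻¹ i j * pd j u y) x :=
      (hFsm u hu i).differentiable (by simp) x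
    have d1 : DifferentiableAt ℝ
        (fun y => u y * (Real.sqrt (g y).det * ∑ j, (g y)⁻¹ i j * pd j v y)) x :=
      du.mul dFv
    have d2 : DifferentiableAt ℝ
        (fun y => v y * (Real.sqrt (g y).det * ∑ j, (g y)⁻¹ i j * pd j u y)) x :=
      dv.mul dFu
    rw [key i, pd_add d1 d2, pd_mul du dFv, pd_mul dv dFu]
  unfold lapBel
  simp only [step]
  simp only [Finset.sum_add_distrib, ← Finset.mul_sum]
  ring

lemma lapBel_conf {n : ℕ} (hn : 3 ≤ n) (g : (Fin n → ℝ) → Matrix (Fin n) (Fin n) ℝ)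
    (hgpd : ∀ x, (g x).PosDef) (hgsm : ∀ i j, ContDiff ℝ (⊤ : ℕ∞) fun x => g x i j)
    (c : (Fin n → ℝ) → ℝ) (hc : ContDiff ℝ (⊤ : ℕ∞) c) (hcpos : ∀ x, 0 < c x)
    (u : (Fin n → ℝ) → ℝ) (hu : ContDiff ℝ (⊤ : ℕ∞) u) (x : Fin n → ℝ) :
    lapBel (fun y => (c y) ^ 4 • g y) u x
      = ((c x) ^ 4)⁻¹ * lapBel g u x
        + (2 * (n : ℝ) - 4) * ((c x) ^ 5)⁻¹ * ((Real.sqrt (g x).det)⁻¹ *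
            ∑ i, pd i c x * (Real.sqrt (g x).det * ∑ j, (g x)⁻¹ i j * pd j u x)) := by
  obtain ⟨m, rfl⟩ := Nat.exists_eq_add_of_le hn
  have hdne : ∀ y, (g y).det ≠ 0 := fun y => (hgpd y).det_pos.ne'
  have hcne : ∀ y, c y ≠ 0 := fun y => (hcpos y).ne'
  have hs : ContDiff ℝ (⊤ : ℕ∞) fun y => Real.sqrt (g y).det :=
    contDiff_sqrt_comp (contDiff_det hgsm) fun y => (hgpd y).det_pos
  have hsne : ∀ y, Real.sqrt (g y).det ≠ 0 :=
    fun y => (Real.sqrt_pos.2 (hgpd y).det_pos).ne'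
  have hG : ∀ i j, ContDiff ℝ (⊤ : ℕ∞) fun y => (g y)⁻¹ i j := contDiff_inv_entry hgsm hdne
  have hFsm : ∀ i : Fin (3 + m),
      ContDiff ℝ (⊤ : ℕ∞) (fun z => Real.sqrt (g z).det * ∑ j, (g z)⁻¹ i j * pd j u z) :=
    fun i => hs.mul (ContDiff.sum fun j _ => (hG i j).mul (contDiff_pd hu j))
  have hsqrt : ∀ y, Real.sqrt ((c y ^ 4 • g y).det)
      = c y ^ (2 * (3 + m)) * Real.sqrt (g y).det := by
    intro y
    rw [Matrix.det_smul, Fintype.card_fin]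
    rw [show (c y ^ 4) ^ (3 + m) = (c y ^ (2 * (3 + m))) ^ 2 by
      rw [← pow_mul, ← pow_mul]; ring_nf]
    rw [Real.sqrt_mul (sq_nonneg _), Real.sqrt_sq (pow_nonneg (hcpos y).le _)]
  have hinv : ∀ y (i j : Fin (3 + m)), (c y ^ 4 • g y)⁻¹ i j
      = (c y ^ 4)⁻¹ * (g y)⁻¹ i j := by
    intro y i j
    haveI := invertibleOfNonzero (pow_ne_zero 4 (hcne y))
    rw [Matrix.inv_smul (A := g y) (c y ^ 4) (isUnit_iff_ne_zero.2 (hdne y))]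
    simp [Matrix.smul_apply, invOf_eq_inv, smul_eq_mul]
  have inner_eq : ∀ i : Fin (3 + m),
      (fun y => Real.sqrt ((c y ^ 4 • g y)).det * ∑ j, (c y ^ 4 • g y)⁻¹ i j * pd j u y)
        = fun y => c y ^ (2 * m + 2)
            * (Real.sqrt (g y).det * ∑ j, (g y)⁻¹ i j * pd j u y) := by
    intro i; funext y
    rw [hsqrt y]
    simp only [hinv y]
    have hpull : ∑ j, (c y ^ 4)⁻¹ * (g y)⁻¹ i j * pd j u y
        = (c y ^ 4)⁻¹ * ∑ j, (g y)⁻¹ i j * pd j u y := by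
      rw [Finset.mul_sum]
      exact Finset.sum_congr rfl fun j _ => by ring
    rw [hpull, show 2 * (3 + m) = 2 * m + 2 + 4 by ring, pow_add]
    have hk : c y ≠ 0 := hcne y
    field_simp
  have step : ∀ i : Fin (3 + m),
      pd i (fun y => c y ^ (2 * m + 2)
          * (Real.sqrt (g y).det * ∑ j, (g y)⁻¹ i j * pd j u y)) x
      = ((2 * m + 2 : ℕ) : ℝ) * c x ^ (2 * m + 1) * pd i c x
            * (Real.sqrt (g x).det * ∑ j, (g x)⁻¹ i j * pd j u x)
        + c x ^ (2 * m + 2)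
            * pd i (fun y => Real.sqrt (g y).det * ∑ j, (g y)⁻¹ i j * pd j u y) x := by
    intro i
    have dc : DifferentiableAt ℝ c x := hc.differentiable (by simp) x
    have dcp : DifferentiableAt ℝ (fun y => c y ^ (2 * m + 2)) x := dc.pow _
    have dF : DifferentiableAt ℝ
        (fun y => Real.sqrt (g y).det * ∑ j, (g y)⁻¹ i j * pd j u y) x :=
      (hFsm i).differentiable (by simp) x
    rw [pd_mul dcp dF, pd_pow dc (2 * m + 2) i,
      show 2 * m + 2 - 1 = 2 * m + 1 from rfl]
  unfold lapBel
  simp only [inner_eq, hsqrt x, step]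
  rw [Finset.sum_add_distrib]
  rw [show ∑ i : Fin (3 + m), ((2 * m + 2 : ℕ) : ℝ) * c x ^ (2 * m + 1) * pd i c x
        * (Real.sqrt (g x).det * ∑ j, (g x)⁻¹ i j * pd j u x)
      = ((2 * m + 2 : ℕ) : ℝ) * c x ^ (2 * m + 1)
        * ∑ i, pd i c x * (Real.sqrt (g x).det * ∑ j, (g x)⁻¹ i j * pd j u x) by
    rw [Finset.mul_sum]; exact Finset.sum_congr rfl fun i _ => by ring]
  rw [← Finset.mul_sum]
  have hk : c x ≠ 0 := hcne x
  have hS : Real.sqrt (g x).det ≠ 0 := hsne x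
  rw [show 2 * (3 + m) = 2 * m + 2 + 4 by ring, pow_add]
  push_cast
  field_simp
  ring

lemma cross_swap {n : ℕ} (M : Matrix (Fin n) (Fin n) ℝ) (hsym : ∀ i j, M i j = M j i)
    (S : ℝ) (a b : Fin n → ℝ) :
    ∑ i, a i * (S * ∑ j, M i j * b j) = ∑ i, b i * (S * ∑ j, M i j * a j) := by
  have e : ∀ (a b : Fin n → ℝ), ∑ i, a i * (S * ∑ j, M i j * b j)
      = ∑ i, ∑ j, S * M i j * a i * b j := by
    intro a b
    refine Finset.sum_congr rfl fun i _ => ?_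
    rw [Finset.mul_sum, Finset.mul_sum]
    exact Finset.sum_congr rfl fun j _ => by ring
  rw [e, e, Finset.sum_comm]
  exact Finset.sum_congr rfl fun j _ => Finset.sum_congr rfl fun i _ => by
    rw [hsym i j]; ring


end auxiliary

/-- Conformal transformation law of the Laplace–Beltrami operator:
`-Δ_{c⁴g} u = c^{-(n+2)} (-Δ_g + q)(c^{n-2} u)` with `q = c^{-(n-2)} Δ_g (c^{n-2})`. -/
theorem stmt0 {n : ℕ} (hn : 3 ≤ n)
    (g : (Fin n → ℝ) → Matrix (Fin n) (Fin n) ℝ)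
    (hgpd : ∀ x, (g x).PosDef)
    (hgsm : ∀ i j, ContDiff ℝ (⊤ : ℕ∞) fun x => g x i j)
    (c : (Fin n → ℝ) → ℝ) (hc : ContDiff ℝ (⊤ : ℕ∞) c) (hcpos : ∀ x, 0 < c x)
    (u : (Fin n → ℝ) → ℝ) (hu : ContDiff ℝ (⊤ : ℕ∞) u) :
    ∀ x, -lapBel (fun y => (c y) ^ 4 • g y) u x
      = (c x) ^ (-((n : ℤ) + 2)) *
          (-(lapBel g (fun y => (c y) ^ (n - 2) * u y) x)
            + ((c x) ^ (-((n : ℤ) - 2)) * lapBel g (fun y => (c y) ^ (n - 2)) x)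
              * ((c x) ^ (n - 2) * u x)) := by
  obtain ⟨m, rfl⟩ := Nat.exists_eq_add_of_le hn
  intro x
  have hcne : ∀ y, c y ≠ 0 := fun y => (hcpos y).ne'
  have hsne : Real.sqrt (g x).det ≠ 0 := (Real.sqrt_pos.2 (hgpd x).det_pos).ne'
  have hv : ContDiff ℝ (⊤ : ℕ∞) fun y => c y ^ (m + 1) := hc.pow _
  simp only [show 3 + m - 2 = m + 1 by omega]
  rw [lapBel_conf hn g hgpd hgsm c hc hcpos u hu x]
  have hz1 : c x ^ (-((↑(3 + m) : ℤ) + 2)) = (c x ^ (m + 5))⁻¹ := by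
    rw [show -((↑(3 + m) : ℤ) + 2) = -((m + 5 : ℕ) : ℤ) by push_cast; ring, zpow_neg,
      zpow_natCast]
  have hz2 : c x ^ (-((↑(3 + m) : ℤ) - 2)) = (c x ^ (m + 1))⁻¹ := by
    rw [show -((↑(3 + m) : ℤ) - 2) = -((m + 1 : ℕ) : ℤ) by push_cast; ring, zpow_neg,
      zpow_natCast]
  rw [hz1, hz2]
  have hA : lapBel g (fun y => c y ^ (m + 1) * u y) x
      = u x * lapBel g (fun y => c y ^ (m + 1)) x + c x ^ (m + 1) * lapBel g u x
        + (Real.sqrt (g x).det)⁻¹ *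
            ∑ i, (pd i u x * (Real.sqrt (g x).det *
                ∑ j, (g x)⁻¹ i j * pd j (fun y => c y ^ (m + 1)) x)
              + pd i (fun y => c y ^ (m + 1)) x * (Real.sqrt (g x).det *
                ∑ j, (g x)⁻¹ i j * pd j u x)) :=
    lapBel_mul g hgpd hgsm (fun y => c y ^ (m + 1)) u hv hu x
  rw [hA]
  have hsym : ∀ i j, (g x)⁻¹ i j = (g x)⁻¹ j i := by
    intro i j
    have h := ((hgpd x).isHermitian.inv).apply j i
    simpa using h
  have hswap : ∑ i, pd i u x * (Real.sqrt (g x).det *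
        ∑ j, (g x)⁻¹ i j * pd j (fun y => c y ^ (m + 1)) x)
      = ∑ i, pd i (fun y => c y ^ (m + 1)) x * (Real.sqrt (g x).det *
        ∑ j, (g x)⁻¹ i j * pd j u x) :=
    cross_swap ((g x)⁻¹) hsym (Real.sqrt (g x).det)
      (fun i => pd i u x) (fun j => pd j (fun y => c y ^ (m + 1)) x)
  have hpdv : ∀ i : Fin (3 + m), pd i (fun z => c z ^ (m + 1)) x
      = ((m + 1 : ℕ) : ℝ) * c x ^ m * pd i c x := by
    intro i
    rw [pd_pow (hc.differentiable (by simp) x) (m + 1) i, Nat.add_sub_cancel]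
  have hcross : ∑ i, (pd i u x * (Real.sqrt (g x).det *
        ∑ j, (g x)⁻¹ i j * pd j (fun y => c y ^ (m + 1)) x)
      + pd i (fun y => c y ^ (m + 1)) x * (Real.sqrt (g x).det *
        ∑ j, (g x)⁻¹ i j * pd j u x))
      = 2 * (((m : ℝ) + 1) * c x ^ m) *
          ∑ i, pd i c x * (Real.sqrt (g x).det * ∑ j, (g x)⁻¹ i j * pd j u x) := by
    rw [Finset.sum_add_distrib, hswap]
    simp only [hpdv]
    have pull : ∑ i : Fin (3 + m), ((m + 1 : ℕ) : ℝ) * c x ^ m * pd i c x *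
          (Real.sqrt (g x).det * ∑ j, (g x)⁻¹ i j * pd j u x)
        = ((m + 1 : ℕ) : ℝ) * c x ^ m *
          ∑ i, pd i c x * (Real.sqrt (g x).det * ∑ j, (g x)⁻¹ i j * pd j u x) := by
      rw [Finset.mul_sum]
      exact Finset.sum_congr rfl fun i _ => by ring
    rw [pull]
    push_cast
    ring
  rw [hcross]
  have hk : c x ≠ 0 := hcne x
  push_cast
  field_simp
  ring
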